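/- arXiv:2604.17838 — 3 statements merged into one kernel-verified Lean document; each statement's English description precedes it below -/
import Mathlib

section
/- Let A be a real m × d matrix such that G := A Aᵀ is invertible, and let Π := I_d − Aᵀ G⁻¹ A. Let B_1, …, B_m : ℝ^d × ℝ^d → ℝ be arbitrary bilinear forms, let p ∈ ℝ^d satisfy A p = 0, and fix J₀ ∈ ℝ^m, v_f ∈ ℝ^d, and real numbers α, γ, σ. Define n := Aᵀ G⁻¹ J₀ ∈ ℝ^d, H₁ ∈ ℝ^m by (H₁)_i := B_i(p, p), H₂ ∈ ℝ^m by (H₂)_i := B_i(p, n), and the drift vectors v_X := σ² p − (α σ²) n and v_P := Π(−σ² v_f − σ² γ p) − σ² Aᵀ G⁻¹ (H₁ − α H₂). Then: (i) A v_X = −(α σ²) J₀; and (ii) for every i ∈ {1,…,m}, B_i(p, v_X) + (A v_P)_i = 0. -/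
open Matrix

/-- algebraic core of the ULLA construction. With `A` an `m × d` real matrix
with invertible Gram matrix `G = A Aᵀ`, projector `Π = 1 - Aᵀ G⁻¹ A`, bilinear forms
`B i`, a tangent momentum `p` (`A p = 0`), `n = Aᵀ G⁻¹ J₀`, curvature corrections
`(H₁) i = B i p p`, `(H₂) i = B i p nv`, and drifts
`vX = σ² p - α σ² n`, `vP = Π (-σ² v_f - σ² γ p) - σ² Aᵀ G⁻¹ (H₁ - α H₂)`:
(i) `A vX = -(α σ²) J₀`, and (ii) for every `i`, `B i p vX + (A vP) i = 0`. -/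
theorem stmt3 {m d : ℕ} (A : Matrix (Fin m) (Fin d) ℝ) (hG : IsUnit (A * Aᵀ))
    (B : Fin m → LinearMap.BilinForm ℝ (Fin d → ℝ))
    (p : Fin d → ℝ) (hp : A *ᵥ p = 0)
    (J₀ : Fin m → ℝ) (v_f : Fin d → ℝ) (α γ σ : ℝ) :
    let G := A * Aᵀ
    let Pr := (1 : Matrix (Fin d) (Fin d) ℝ) - Aᵀ * G⁻¹ * A
    let nv := Aᵀ *ᵥ (G⁻¹ *ᵥ J₀)
    let H₁ : Fin m → ℝ := fun i => B i p p
    let H₂ : Fin m → ℝ := fun i => B i p nv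
    let vX := σ ^ 2 • p - (α * σ ^ 2) • nv
    let vP := Pr *ᵥ ((-(σ ^ 2)) • v_f - (σ ^ 2 * γ) • p)
        - σ ^ 2 • (Aᵀ *ᵥ (G⁻¹ *ᵥ (H₁ - α • H₂)))
    (A *ᵥ vX = (-(α * σ ^ 2)) • J₀) ∧
    (∀ i, B i p vX + (A *ᵥ vP) i = 0) := by
  intro G Pr nv H₁ H₂ vX vP
  have hGdet : IsUnit G.det := (Matrix.isUnit_iff_isUnit_det _).mp hG
  have hGinv : G * G⁻¹ = 1 := Matrix.mul_nonsing_inv G hGdet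
  -- A *ᵥ (Aᵀ *ᵥ (G⁻¹ *ᵥ x)) = x
  have key : ∀ x : Fin m → ℝ, A *ᵥ (Aᵀ *ᵥ (G⁻¹ *ᵥ x)) = x := by
    intro x
    rw [Matrix.mulVec_mulVec, Matrix.mulVec_mulVec]
    show (G * G⁻¹) *ᵥ x = x
    rw [hGinv, Matrix.one_mulVec]
  have hAn : A *ᵥ nv = J₀ := key J₀
  -- A * Pr = 0
  have hAPr : A * Pr = 0 := by
    show A * (1 - Aᵀ * G⁻¹ * A) = 0
    have : A * (Aᵀ * G⁻¹ * A) = A := by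
      rw [← Matrix.mul_assoc, ← Matrix.mul_assoc]
      show G * G⁻¹ * A = A
      rw [hGinv, Matrix.one_mul]
    rw [Matrix.mul_sub, Matrix.mul_one, this, sub_self]
  have hAvX : A *ᵥ vX = (-(α * σ ^ 2)) • J₀ := by
    show A *ᵥ (σ ^ 2 • p - (α * σ ^ 2) • nv) = _
    rw [Matrix.mulVec_sub, Matrix.mulVec_smul, Matrix.mulVec_smul, hp, hAn, smul_zero]
    ext i
    simp
  refine ⟨hAvX, fun i => ?_⟩
  have hAvP : A *ᵥ vP = fun i => -(σ ^ 2 * (H₁ i - α * H₂ i)) := by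
    show A *ᵥ (Pr *ᵥ _ - σ ^ 2 • (Aᵀ *ᵥ (G⁻¹ *ᵥ (H₁ - α • H₂)))) = _
    rw [Matrix.mulVec_sub, Matrix.mulVec_mulVec, hAPr, Matrix.mulVec_smul, key]
    ext j
    simp [Matrix.zero_mulVec, Pi.smul_apply, Pi.sub_apply]
  rw [hAvP]
  have hB : B i p vX = σ ^ 2 * H₁ i - α * σ ^ 2 * H₂ i := by
    show B i p (σ ^ 2 • p - (α * σ ^ 2) • nv) = _
    rw [map_sub, LinearMap.map_smul, LinearMap.map_smul]
    show σ ^ 2 * B i p p - (α * σ ^ 2) * B i p nv = _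
    ring
  rw [hB]
  ring
end

section
/- Let d, r be natural numbers and let n_1, …, n_r : ℝ^d → ℝ^d be differentiable maps that are pointwise orthonormal, i.e., ⟨n_i(x), n_j(x)⟩ = δ_{ij} for all x ∈ ℝ^d and all i, j. Define the matrix field Π(x) := I_d − Σ_{l=1}^r n_l(x) n_l(x)ᵀ, define for a differentiable vector field X : ℝ^d → ℝ^d the intrinsic divergence div_Σ X(x) := Σ_{i,j} Π(x)_{ij} ∂_i X_j(x) (where ∂_i X_j(x) is the j-th component of the Fréchet derivative of X at x applied to the i-th standard basis vector), and set f_k(x) := Π(x) e_k for the k-th standard basis vector e_k. Then for every x ∈ ℝ^d, Σ_{k=1}^d (div_Σ f_k)(x) · f_k(x) = 0. -/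
open Matrix BigOperators

/-- The pointwise orthogonal projector `Π x = I - Σ_l n_l(x) n_l(x)ᵀ` onto the orthogonal
complement of `span {n_1(x), …, n_r(x)}`. -/
noncomputable def projField {d r : ℕ} (n : Fin r → (Fin d → ℝ) → (Fin d → ℝ))
    (x : Fin d → ℝ) : Matrix (Fin d) (Fin d) ℝ :=
  1 - ∑ l, Matrix.vecMulVec (n l x) (n l x)

/-- Intrinsic divergence `div_Σ X (x) = Σ_{i,j} Π(x)_{ij} ∂_i X_j (x)`, where
`∂_i X_j (x)` is the `j`-th component of the Fréchet derivative of `X` at `x` applied to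
the `i`-th standard basis vector. -/
noncomputable def divSigma {d r : ℕ} (n : Fin r → (Fin d → ℝ) → (Fin d → ℝ))
    (X : (Fin d → ℝ) → (Fin d → ℝ)) (x : Fin d → ℝ) : ℝ :=
  ∑ i, ∑ j, projField n x i j * fderiv ℝ X x (Pi.single i 1) j

/-! At every point `Π` is a symmetric idempotent, so differentiating `Π² = Π` in direction `eᵢ`
gives `Π ∂ᵢΠ + ∂ᵢΠ Π = ∂ᵢΠ`, and multiplying on the right by `Π` yields `Π ∂ᵢΠ Π = 0`.
Since `∂ᵢ f_k` is the `k`-th column of `∂ᵢΠ` and `f_k = Π e_k`, the `m`-th entry of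
`Σ_k (div_Σ f_k) f_k` is `Σᵢ (Π ∂ᵢΠ Π)ᵢₘ = 0`. -/

theorem IsIdempotentElem.mul_mul_self_eq_zero_of_mul_add_mul {R : Type*} [Ring R] {p q : R}
    (hp : IsIdempotentElem p) (hq : p * q + q * p = q) : p * q * p = 0 := by
  have h := congrArg (· * p) hq
  simp only [add_mul, mul_assoc, hp.eq] at h
  rwa [add_eq_right, ← mul_assoc] at h

section EntryFDeriv

variable {ι E : Type*} [Fintype ι] [NormedAddCommGroup E] [NormedSpace ℝ E]

noncomputable def entryFDeriv (P : E → Matrix ι ι ℝ) (x v : E) : Matrix ι ι ℝ :=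
  Matrix.of fun a b => fderiv ℝ (fun y => P y a b) x v

theorem mul_entryFDeriv_add_entryFDeriv_mul_eq {P : E → Matrix ι ι ℝ} {x : E}
    (hP : ∀ a b, DifferentiableAt ℝ (fun y => P y a b) x)
    (hidem : ∀ᶠ y in nhds x, IsIdempotentElem (P y)) (v : E) :
    P x * entryFDeriv P x v + entryFDeriv P x v * P x = entryFDeriv P x v := by
  ext a b
  have hprod : HasFDerivAt (fun y => ∑ j, P y a j * P y j b)
      (∑ j, (P x a j • fderiv ℝ (fun y => P y j b) x
        + P x j b • fderiv ℝ (fun y => P y a j) x)) x :=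
    HasFDerivAt.fun_sum fun j _ => (hP a j).hasFDerivAt.mul (hP j b).hasFDerivAt
  have hentry : (fun y => ∑ j, P y a j * P y j b) =ᶠ[nhds x] fun y => P y a b := by
    filter_upwards [hidem] with y hy
    rw [← Matrix.mul_apply, hy.eq]
  have := (hprod.congr_of_eventuallyEq hentry.symm).fderiv
  simp [entryFDeriv, Matrix.mul_apply, this, Finset.sum_add_distrib, mul_comm]

theorem fderiv_mulVec_single_one [DecidableEq ι] {P : E → Matrix ι ι ℝ} {x : E} {k : ι}
    (hP : ∀ a, DifferentiableAt ℝ (fun y => P y a k) x) (v : E) :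
    fderiv ℝ (fun y => P y *ᵥ Pi.single k 1) x v = fun a => entryFDeriv P x v a k := by
  have hcol : (fun y => P y *ᵥ Pi.single k 1) = fun y a => P y a k := by
    funext y a
    simp
  rw [hcol, fderiv_pi hP]
  rfl

end EntryFDeriv

theorem Matrix.sum_smul_mulVec_single_eq_zero {ι R : Type*} [Fintype ι] [DecidableEq ι]
    [CommRing R] {P : Matrix ι ι R} (hP : Pᵀ = P) (D : ι → Matrix ι ι R)
    (hD : ∀ i, P * D i * P = 0) :
    ∑ k, (∑ i, ∑ j, P i j * D i j k) • (P *ᵥ Pi.single k 1) = 0 := by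
  ext m
  have hsymm : ∀ a b, P a b = P b a := fun a b => by rw [← Matrix.transpose_apply P, hP]
  have hPDP : ∀ i, ∑ k, (∑ j, P i j * D i j k) * P k m = 0 := fun i => by
    simpa [Matrix.mul_apply] using congrFun (congrFun (hD i) i) m
  calc _ = ∑ i, ∑ k, (∑ j, P i j * D i j k) * P k m := by
        simp only [Finset.sum_apply, Pi.smul_apply, Matrix.mulVec_single_one, smul_eq_mul,
          Matrix.col_apply, Finset.sum_mul]
        rw [Finset.sum_comm]
        simp only [hsymm m]
    _ = 0 := by simp [hPDP]

theorem Matrix.isIdempotentElem_one_sub_transpose_mul {m n R : Type*} [Fintype m] [Fintype n]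
    [DecidableEq m] [DecidableEq n] [CommRing R] {N : Matrix m n R} (hN : N * Nᵀ = 1) :
    IsIdempotentElem (1 - Nᵀ * N) := by
  refine IsIdempotentElem.one_sub ?_
  rw [IsIdempotentElem, Matrix.mul_assoc, ← Matrix.mul_assoc N, hN, Matrix.one_mul]

section projField

variable {d r : ℕ} (n : Fin r → (Fin d → ℝ) → (Fin d → ℝ))

theorem projField_eq_one_sub_transpose_mul (x : Fin d → ℝ) :
    projField n x = 1 - (Matrix.of fun l => n l x)ᵀ * Matrix.of fun l => n l x := by
  ext a b
  simp [projField, Matrix.mul_apply, Matrix.sum_apply, Matrix.vecMulVec_apply]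

theorem transpose_projField (x : Fin d → ℝ) : (projField n x)ᵀ = projField n x := by
  simp [projField_eq_one_sub_transpose_mul, Matrix.transpose_sub]

theorem isIdempotentElem_projField {x : Fin d → ℝ}
    (horth : ∀ i j, ∑ k, n i x k * n j x k = if i = j then (1 : ℝ) else 0) :
    IsIdempotentElem (projField n x) := by
  rw [projField_eq_one_sub_transpose_mul]
  refine Matrix.isIdempotentElem_one_sub_transpose_mul ?_
  ext i j
  simp only [Matrix.mul_apply, Matrix.transpose_apply, Matrix.of_apply, Matrix.one_apply, horth]

theorem differentiable_projField_apply (hdiff : ∀ l, Differentiable ℝ (n l)) (a b : Fin d) :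
    Differentiable ℝ fun y => projField n y a b := by
  have hcoord : ∀ l c, Differentiable ℝ fun y => n l y c :=
    fun l => differentiable_pi.mp (hdiff l)
  simp only [projField, Matrix.sub_apply, Matrix.sum_apply, Matrix.vecMulVec_apply]
  fun_prop

theorem divSigma_mulVec_single_one {x : Fin d → ℝ}
    (hdiff : ∀ a b, DifferentiableAt ℝ (fun y => projField n y a b) x) (k : Fin d) :
    divSigma n (fun y => projField n y *ᵥ Pi.single k 1) x
      = ∑ i, ∑ j, projField n x i j * entryFDeriv (projField n) x (Pi.single i 1) j k := by
  simp only [divSigma, fderiv_mulVec_single_one fun a => hdiff a k]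

end projField

/-- with `f_k (x) = Π(x) e_k`, the identity
`Σ_k (div_Σ f_k)(x) • f_k(x) = 0` holds at every point, for pointwise-orthonormal
differentiable normal fields `n_1, …, n_r`. -/
theorem stmt7 {d r : ℕ} (n : Fin r → (Fin d → ℝ) → (Fin d → ℝ))
    (hdiff : ∀ l, Differentiable ℝ (n l))
    (horth : ∀ (x : Fin d → ℝ) (i j : Fin r),
      ∑ k, n i x k * n j x k = if i = j then (1 : ℝ) else 0) :
    ∀ x : Fin d → ℝ,
      ∑ k : Fin d,
        divSigma n (fun y => projField n y *ᵥ Pi.single k 1) x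
          • (projField n x *ᵥ Pi.single k 1) = (0 : Fin d → ℝ) := by
  intro x
  have hdiffP a b := differentiable_projField_apply n hdiff a b x
  have hidem y := isIdempotentElem_projField n (horth y)
  simp only [divSigma_mulVec_single_one n hdiffP]
  exact Matrix.sum_smul_mulVec_single_eq_zero (transpose_projField n x) _ fun i =>
    (hidem x).mul_mul_self_eq_zero_of_mul_add_mul <|
      mul_entryFDeriv_add_entryFDeriv_mul_eq hdiffP (Filter.Eventually.of_forall hidem) _
end

section
/- Fix d ∈ ℕ and constants L_b, C, c₀, c₁, σ ≥ 0. Then there exists a constant K > 0, depending only on L_b, C, c₀, c₁ and σ, with the following property. Let Π : ℝ^d → ℝ^{d×d} be measurable with ‖Π(y)u‖ ≤ ‖u‖ for all y, u ∈ ℝ^d; let b : ℝ^d → ℝ^d be measurable with ‖b(y) − b(y′)‖ ≤ L_b‖y − y′‖ and ‖b(y)‖ ≤ C(1 + ‖y‖) for all y, y′; let φ : ℝ^d → ℝ^d be measurable with ‖φ(y)‖² ≤ c₀ + c₁‖y‖² for all y; let 0 < Δt ≤ 1, and define F(y, z) := y + Δt · Π(y) b(y) + σ√Δt · Π(y) z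 + σ²Δt · φ(y). Then for any probability space and any random vectors Y, Y′, ζ : Ω → ℝ^d with E‖Y‖² < ∞, E‖Y′‖² < ∞, E‖ζ‖² < ∞: E‖F(Y, ζ) − F(Y′, ζ)‖² ≤ K · ( E‖Y − Y′‖² + Δt · (1 + E‖Y‖² + E‖Y′‖² + E‖ζ‖²) ). -/
open MeasureTheory

/-- The one-step landing backward update of OLLA:
`F(y, z) = y + Δt · Π(y) b(y) + σ √Δt · Π(y) z + σ² Δt · φ(y)`. -/
noncomputable def ollaStep {d : ℕ}
    (Pr : EuclideanSpace ℝ (Fin d) → (EuclideanSpace ℝ (Fin d) →L[ℝ] EuclideanSpace ℝ (Fin d)))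
    (b φ : EuclideanSpace ℝ (Fin d) → EuclideanSpace ℝ (Fin d))
    (σ Δt : ℝ) (y z : EuclideanSpace ℝ (Fin d)) : EuclideanSpace ℝ (Fin d) :=
  y + Δt • Pr y (b y) + (σ * Real.sqrt Δt) • Pr y z + (σ ^ 2 * Δt) • φ y

private lemma four_sq (w x u v : ℝ) : (w + x + u + v) ^ 2 ≤ 4 * (w ^ 2 + x ^ 2 + u ^ 2 + v ^ 2) := by
  nlinarith [sq_nonneg (w - x), sq_nonneg (w - u), sq_nonneg (w - v), sq_nonneg (x - u),
    sq_nonneg (x - v), sq_nonneg (u - v)]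

private lemma hB_aux (C Δt B1 B2 n1 n2 : ℝ) (hC : 0 ≤ C) (hΔ : 0 < Δt) (hΔ1 : Δt ≤ 1)
    (hB1 : 0 ≤ B1) (hB2 : 0 ≤ B2) (hn1 : 0 ≤ n1) (hn2 : 0 ≤ n2)
    (h1 : B1 ≤ C * (1 + n1)) (h2 : B2 ≤ C * (1 + n2)) :
    (Δt * (B1 + B2)) ^ 2 ≤ 8 * C ^ 2 * (Δt * (1 + n1 ^ 2 + n2 ^ 2)) := by
  have s1 : B1 ^ 2 ≤ (C * (1 + n1)) ^ 2 := pow_le_pow_left₀ hB1 h1 2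
  have s2 : B2 ^ 2 ≤ (C * (1 + n2)) ^ 2 := pow_le_pow_left₀ hB2 h2 2
  have s5 : (B1 + B2) ^ 2 ≤ 8 * C ^ 2 * (1 + n1 ^ 2 + n2 ^ 2) := by
    nlinarith [sq_nonneg (B1 - B2), mul_nonneg (sq_nonneg C) (sq_nonneg (1 - n1)),
      mul_nonneg (sq_nonneg C) (sq_nonneg (1 - n2))]
  have hΔt2 : Δt ^ 2 ≤ Δt := by nlinarith
  calc (Δt * (B1 + B2)) ^ 2 = Δt ^ 2 * (B1 + B2) ^ 2 := by ring
    _ ≤ Δt * (B1 + B2) ^ 2 := mul_le_mul_of_nonneg_right hΔt2 (sq_nonneg _)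
    _ ≤ Δt * (8 * C ^ 2 * (1 + n1 ^ 2 + n2 ^ 2)) := mul_le_mul_of_nonneg_left s5 hΔ.le
    _ = 8 * C ^ 2 * (Δt * (1 + n1 ^ 2 + n2 ^ 2)) := by ring

private lemma hP_aux (c₀ c₁ σ Δt P1 P2 n1 n2 : ℝ) (hc₀ : 0 ≤ c₀) (hc₁ : 0 ≤ c₁) (hσ : 0 ≤ σ)
    (hΔ : 0 < Δt) (hΔ1 : Δt ≤ 1) (hP1 : 0 ≤ P1) (hP2 : 0 ≤ P2)
    (h1 : P1 ^ 2 ≤ c₀ + c₁ * n1 ^ 2) (h2 : P2 ^ 2 ≤ c₀ + c₁ * n2 ^ 2) :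
    (σ ^ 2 * Δt * (P1 + P2)) ^ 2
      ≤ (4 * σ ^ 4 * c₀ + 2 * σ ^ 4 * c₁) * (Δt * (1 + n1 ^ 2 + n2 ^ 2)) := by
  have hΔt2 : Δt ^ 2 ≤ Δt := by nlinarith
  have hs4 : (0:ℝ) ≤ σ ^ 4 := by positivity
  have key : (P1 + P2) ^ 2 ≤ 4 * c₀ + 2 * c₁ * (n1 ^ 2 + n2 ^ 2) := by
    nlinarith [sq_nonneg (P1 - P2)]
  have key2 : (P1 + P2) ^ 2 ≤ (4 * c₀ + 2 * c₁) * (1 + n1 ^ 2 + n2 ^ 2) := by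
    nlinarith [mul_nonneg hc₀ (sq_nonneg n1), mul_nonneg hc₀ (sq_nonneg n2),
      mul_nonneg (mul_nonneg hc₁ (sq_nonneg n1)) (sq_nonneg n2), sq_nonneg n1, sq_nonneg n2,
      mul_nonneg hc₁ (sq_nonneg n1), mul_nonneg hc₁ (sq_nonneg n2)]
  calc (σ ^ 2 * Δt * (P1 + P2)) ^ 2 = σ ^ 4 * (Δt ^ 2 * (P1 + P2) ^ 2) := by ring
    _ ≤ σ ^ 4 * (Δt * (P1 + P2) ^ 2) :=
        mul_le_mul_of_nonneg_left (mul_le_mul_of_nonneg_right hΔt2 (sq_nonneg _)) hs4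
    _ ≤ σ ^ 4 * (Δt * ((4 * c₀ + 2 * c₁) * (1 + n1 ^ 2 + n2 ^ 2))) :=
        mul_le_mul_of_nonneg_left (mul_le_mul_of_nonneg_left key2 hΔ.le) hs4
    _ = (4 * σ ^ 4 * c₀ + 2 * σ ^ 4 * c₁) * (Δt * (1 + n1 ^ 2 + n2 ^ 2)) := by ring

private lemma fin_aux (M s2 a2 dS dZ : ℝ) (hM : 0 ≤ M) (hs2 : 0 ≤ s2) (ha : 0 ≤ a2)
    (hdS : 0 ≤ dS) (hdZ : 0 ≤ dZ) :
    4 * a2 + M * dS + 16 * s2 * dZ ≤ (4 + M + 16 * s2) * (a2 + dS + dZ) := by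
  nlinarith [mul_nonneg hM ha, mul_nonneg hM hdZ, mul_nonneg hs2 ha, mul_nonneg hs2 hdS]

set_option maxHeartbeats 800000 in
lemma pt {d : ℕ} (C c₀ c₁ σ : ℝ) (hC : 0 ≤ C) (hc₀ : 0 ≤ c₀) (hc₁ : 0 ≤ c₁) (hσ : 0 ≤ σ)
    (Pr : EuclideanSpace ℝ (Fin d) → (EuclideanSpace ℝ (Fin d) →L[ℝ] EuclideanSpace ℝ (Fin d)))
    (hPr : ∀ y u, ‖Pr y u‖ ≤ ‖u‖)
    (b φ : EuclideanSpace ℝ (Fin d) → EuclideanSpace ℝ (Fin d))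
    (hb : ∀ y, ‖b y‖ ≤ C * (1 + ‖y‖))
    (hφ : ∀ y, ‖φ y‖ ^ 2 ≤ c₀ + c₁ * ‖y‖ ^ 2)
    (Δt : ℝ) (hΔ : 0 < Δt) (hΔ1 : Δt ≤ 1)
    (y y' z : EuclideanSpace ℝ (Fin d)) :
    ‖ollaStep Pr b φ σ Δt y z - ollaStep Pr b φ σ Δt y' z‖ ^ 2
      ≤ (4 + (32*C^2 + 16*σ^4*c₀ + 8*σ^4*c₁) + 16*σ^2) *
        (‖y - y'‖ ^ 2 + Δt * (1 + ‖y‖ ^ 2 + ‖y'‖ ^ 2 + ‖z‖ ^ 2)) := by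
  set T := Real.sqrt Δt with hT
  have hT0 : 0 ≤ T := Real.sqrt_nonneg _
  have hT2 : T ^ 2 = Δt := Real.sq_sqrt hΔ.le
  have hD : ollaStep Pr b φ σ Δt y z - ollaStep Pr b φ σ Δt y' z
      = (y - y') + Δt • (Pr y (b y) - Pr y' (b y'))
        + (σ * T) • (Pr y z - Pr y' z) + (σ ^ 2 * Δt) • (φ y - φ y') := by
    simp only [ollaStep]
    module
  have h1 : ‖ollaStep Pr b φ σ Δt y z - ollaStep Pr b φ σ Δt y' z‖
      ≤ ‖y - y'‖ + Δt * (‖b y‖ + ‖b y'‖) + (σ * T) * (2 * ‖z‖)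
        + (σ ^ 2 * Δt) * (‖φ y‖ + ‖φ y'‖) := by
    rw [hD]
    have e1 : ‖Δt • (Pr y (b y) - Pr y' (b y'))‖ ≤ Δt * (‖b y‖ + ‖b y'‖) := by
      rw [norm_smul, Real.norm_eq_abs, abs_of_pos hΔ]
      exact mul_le_mul_of_nonneg_left
        ((norm_sub_le _ _).trans (add_le_add (hPr y (b y)) (hPr y' (b y')))) hΔ.le
    have e2 : ‖(σ * T) • (Pr y z - Pr y' z)‖ ≤ (σ * T) * (2 * ‖z‖) := by
      rw [norm_smul, Real.norm_eq_abs, abs_of_nonneg (mul_nonneg hσ hT0)]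
      refine mul_le_mul_of_nonneg_left ?_ (mul_nonneg hσ hT0)
      have := (norm_sub_le (Pr y z) (Pr y' z)).trans (add_le_add (hPr y z) (hPr y' z))
      linarith
    have e3 : ‖(σ ^ 2 * Δt) • (φ y - φ y')‖ ≤ (σ ^ 2 * Δt) * (‖φ y‖ + ‖φ y'‖) := by
      rw [norm_smul, Real.norm_eq_abs, abs_of_nonneg (mul_nonneg (sq_nonneg σ) hΔ.le)]
      exact mul_le_mul_of_nonneg_left (norm_sub_le _ _)
        (mul_nonneg (sq_nonneg σ) hΔ.le)
    calc ‖_ + _ + _ + _‖ ≤ ‖(y - y') + Δt • (Pr y (b y) - Pr y' (b y'))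
            + (σ * T) • (Pr y z - Pr y' z)‖ + ‖(σ ^ 2 * Δt) • (φ y - φ y')‖ :=
          norm_add_le _ _
      _ ≤ (‖(y - y') + Δt • (Pr y (b y) - Pr y' (b y'))‖
            + ‖(σ * T) • (Pr y z - Pr y' z)‖) + ‖(σ ^ 2 * Δt) • (φ y - φ y')‖ := by
          gcongr; exact norm_add_le _ _
      _ ≤ ((‖y - y'‖ + ‖Δt • (Pr y (b y) - Pr y' (b y'))‖)
            + ‖(σ * T) • (Pr y z - Pr y' z)‖) + ‖(σ ^ 2 * Δt) • (φ y - φ y')‖ := by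
          gcongr; exact norm_add_le _ _
      _ ≤ _ := by linarith
  have h2 : ‖ollaStep Pr b φ σ Δt y z - ollaStep Pr b φ σ Δt y' z‖ ^ 2
      ≤ (‖y - y'‖ + Δt * (‖b y‖ + ‖b y'‖) + (σ * T) * (2 * ‖z‖)
          + (σ ^ 2 * Δt) * (‖φ y‖ + ‖φ y'‖)) ^ 2 :=
    pow_le_pow_left₀ (norm_nonneg _) h1 2
  have h4 := four_sq ‖y - y'‖ (Δt * (‖b y‖ + ‖b y'‖)) ((σ * T) * (2 * ‖z‖))
    ((σ ^ 2 * Δt) * (‖φ y‖ + ‖φ y'‖))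
  have hB := hB_aux C Δt ‖b y‖ ‖b y'‖ ‖y‖ ‖y'‖ hC hΔ hΔ1 (norm_nonneg _) (norm_nonneg _)
    (norm_nonneg _) (norm_nonneg _) (hb y) (hb y')
  have hZeq : ((σ * T) * (2 * ‖z‖)) ^ 2 = 4 * σ ^ 2 * (Δt * ‖z‖ ^ 2) := by
    rw [← hT2]; ring
  have hP := hP_aux c₀ c₁ σ Δt ‖φ y‖ ‖φ y'‖ ‖y‖ ‖y'‖ hc₀ hc₁ hσ hΔ hΔ1
    (norm_nonneg _) (norm_nonneg _) (hφ y) (hφ y')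
  have hfin := fin_aux (32*C^2 + 16*σ^4*c₀ + 8*σ^4*c₁) (σ ^ 2) (‖y - y'‖ ^ 2)
    (Δt * (1 + ‖y‖ ^ 2 + ‖y'‖ ^ 2)) (Δt * ‖z‖ ^ 2)
    (by positivity) (sq_nonneg σ) (sq_nonneg _) (by positivity) (by positivity)
  have hring : (4 + (32*C^2 + 16*σ^4*c₀ + 8*σ^4*c₁) + 16 * σ ^ 2) *
        (‖y - y'‖ ^ 2 + Δt * (1 + ‖y‖ ^ 2 + ‖y'‖ ^ 2) + Δt * ‖z‖ ^ 2)
      = (4 + (32*C^2 + 16*σ^4*c₀ + 8*σ^4*c₁) + 16*σ^2) *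
        (‖y - y'‖ ^ 2 + Δt * (1 + ‖y‖ ^ 2 + ‖y'‖ ^ 2 + ‖z‖ ^ 2)) := by ring
  linarith

/-- synchronous-coupling second-moment estimate for the one-step landing
backward update of OLLA. There is a constant `K > 0` depending only on
`L_b, C, c₀, c₁, σ` such that for every contraction-valued measurable `Π`, every
Lipschitz linear-growth drift `b`, every quadratic-growth normal term `φ`, every step
size `0 < Δt ≤ 1`, every probability space and square-integrable random vectors
`Y, Y', ζ`:
`E‖F(Y,ζ) - F(Y',ζ)‖² ≤ K (E‖Y - Y'‖² + Δt (1 + E‖Y‖² + E‖Y'‖² + E‖ζ‖²))`. -/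
theorem stmt14 (d : ℕ) (L_b C c₀ c₁ σ : ℝ)
    (hL : 0 ≤ L_b) (hC : 0 ≤ C) (hc₀ : 0 ≤ c₀) (hc₁ : 0 ≤ c₁) (hσ : 0 ≤ σ) :
    ∃ K > (0 : ℝ),
      ∀ (Pr : EuclideanSpace ℝ (Fin d) →
          (EuclideanSpace ℝ (Fin d) →L[ℝ] EuclideanSpace ℝ (Fin d))),
        Measurable Pr →
        (∀ y u, ‖Pr y u‖ ≤ ‖u‖) →
      ∀ (b : EuclideanSpace ℝ (Fin d) → EuclideanSpace ℝ (Fin d)),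
        Measurable b →
        (∀ y y', ‖b y - b y'‖ ≤ L_b * ‖y - y'‖) →
        (∀ y, ‖b y‖ ≤ C * (1 + ‖y‖)) →
      ∀ (φ : EuclideanSpace ℝ (Fin d) → EuclideanSpace ℝ (Fin d)),
        Measurable φ →
        (∀ y, ‖φ y‖ ^ 2 ≤ c₀ + c₁ * ‖y‖ ^ 2) →
      ∀ (Δt : ℝ), 0 < Δt → Δt ≤ 1 →
      ∀ (Ω : Type) [inst : MeasureSpace Ω], IsProbabilityMeasure (volume : Measure Ω) →
      ∀ (Y Y' ζ : Ω → EuclideanSpace ℝ (Fin d)),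
        Measurable Y → Measurable Y' → Measurable ζ →
        Integrable (fun ω => ‖Y ω‖ ^ 2) → Integrable (fun ω => ‖Y' ω‖ ^ 2) →
        Integrable (fun ω => ‖ζ ω‖ ^ 2) →
        (∫ ω, ‖ollaStep Pr b φ σ Δt (Y ω) (ζ ω)
            - ollaStep Pr b φ σ Δt (Y' ω) (ζ ω)‖ ^ 2)
          ≤ K * ((∫ ω, ‖Y ω - Y' ω‖ ^ 2)
              + Δt * (1 + (∫ ω, ‖Y ω‖ ^ 2) + (∫ ω, ‖Y' ω‖ ^ 2) + (∫ ω, ‖ζ ω‖ ^ 2))) := by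
  refine ⟨4 + (32*C^2 + 16*σ^4*c₀ + 8*σ^4*c₁) + 16*σ^2, by positivity, ?_⟩
  intro Pr hPrM hPr b hbM hbLip hb φ hφM hφ Δt hΔ hΔ1 Ω inst hprob Y Y' ζ hY hY' hζ hIY hIY' hIζ
  set K : ℝ := 4 + (32*C^2 + 16*σ^4*c₀ + 8*σ^4*c₁) + 16*σ^2 with hK
  have hK0 : (0:ℝ) < K := by positivity
  have hdiff : Integrable (fun ω => ‖Y ω - Y' ω‖ ^ 2) := by
    refine Integrable.mono' (((hIY.const_mul 2).add (hIY'.const_mul 2)))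
      ((hY.sub hY').norm.pow_const 2).aestronglyMeasurable ?_
    filter_upwards with ω
    simp only [Pi.add_apply]
    rw [Real.norm_eq_abs, abs_of_nonneg (by positivity)]
    have h := norm_sub_le (Y ω) (Y' ω)
    nlinarith [norm_nonneg (Y ω - Y' ω), norm_nonneg (Y ω), norm_nonneg (Y' ω),
      sq_nonneg (‖Y ω‖ - ‖Y' ω‖)]
  have hInner : Integrable (fun ω => 1 + ‖Y ω‖ ^ 2 + ‖Y' ω‖ ^ 2 + ‖ζ ω‖ ^ 2) :=
    (((integrable_const 1).add hIY).add hIY').add hIζ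
  have hg : Integrable (fun ω =>
      K * (‖Y ω - Y' ω‖ ^ 2 + Δt * (1 + ‖Y ω‖ ^ 2 + ‖Y' ω‖ ^ 2 + ‖ζ ω‖ ^ 2))) :=
    (hdiff.add (hInner.const_mul Δt)).const_mul K
  calc (∫ ω, ‖ollaStep Pr b φ σ Δt (Y ω) (ζ ω) - ollaStep Pr b φ σ Δt (Y' ω) (ζ ω)‖ ^ 2)
      ≤ ∫ ω, K * (‖Y ω - Y' ω‖ ^ 2 + Δt * (1 + ‖Y ω‖ ^ 2 + ‖Y' ω‖ ^ 2 + ‖ζ ω‖ ^ 2)) := by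
        refine integral_mono_of_nonneg (Filter.Eventually.of_forall fun ω => by positivity) hg
          (Filter.Eventually.of_forall fun ω => ?_)
        exact pt C c₀ c₁ σ hC hc₀ hc₁ hσ Pr hPr b φ hb hφ Δt hΔ hΔ1 (Y ω) (Y' ω) (ζ ω)
    _ = K * ((∫ ω, ‖Y ω - Y' ω‖ ^ 2)
          + Δt * (1 + (∫ ω, ‖Y ω‖ ^ 2) + (∫ ω, ‖Y' ω‖ ^ 2) + (∫ ω, ‖ζ ω‖ ^ 2))) := by
        have i3 : Integrable (fun ω => (1:ℝ) + ‖Y ω‖ ^ 2 + ‖Y' ω‖ ^ 2) :=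
          ((integrable_const 1).add hIY).add hIY'
        have i2 : Integrable (fun ω => (1:ℝ) + ‖Y ω‖ ^ 2) := (integrable_const 1).add hIY
        have i1 : Integrable (fun _ : Ω => (1:ℝ)) := integrable_const 1
        rw [integral_const_mul, integral_add hdiff (hInner.const_mul Δt), integral_const_mul,
          integral_add i3 hIζ, integral_add i2 hIY', integral_add i1 hIY, integral_const]
        simp
end
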